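/- Let X be a subshift of finite type and φ an endomorphism of X. If liminf_{n→∞} |I(-n, φ)| < ∞, then φ has finite order in End(X, σ)/⟨σ⟩; that is, there exist integers m ≥ 1 and k such that φ^m = σ^k. -/

import Mathlib

open Filter Topology

/-- The left shift on bi-infinite sequences. -/
def shift {A : Type*} (x : ℤ → A) : ℤ → A := fun n => x (n + 1)

/-- The shift by `k` places (`σ^k`). -/
def zshift {A : Type*} (k : ℤ) (x : ℤ → A) : ℤ → A := fun n => x (n + k)

/-- A subshift: a closed, shift-invariant subset of `Σ^ℤ`. -/
def IsSubshift {A : Type*} [TopologicalSpace A] (X : Set (ℤ → A)) : Prop :=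
  IsClosed X ∧ shift '' X = X

/-- An endomorphism of the subshift `X`: a continuous shift-commuting surjection of `X`. -/
structure IsEndo {A : Type*} [TopologicalSpace A] (X : Set (ℤ → A))
    (φ : (ℤ → A) → (ℤ → A)) : Prop where
  maps : Set.MapsTo φ X X
  surj : Set.SurjOn φ X X
  cont : ContinuousOn φ X
  comm : ∀ x ∈ X, φ (shift x) = shift (φ x)

/-- `S` φ-codes `T`: agreement of two points of `X` on `S` forces agreement of their
φ-images on `T`. -/
def Codes {A : Type*} (X : Set (ℤ → A)) (φ : (ℤ → A) → (ℤ → A)) (S T : Set ℤ) : Prop :=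
  ∀ x ∈ X, ∀ y ∈ X, (∀ i ∈ S, x i = y i) → ∀ j ∈ T, φ x j = φ y j

/-- The set of integers `W` such that `[0,∞)` φⁿ-codes `[W,∞)`; `W⁺(n,φ)` is its
least element. -/
def WplusSet {A : Type*} (X : Set (ℤ → A)) (φ : (ℤ → A) → (ℤ → A)) (n : ℕ) : Set ℤ :=
  {W | Codes X (φ^[n]) (Set.Ici 0) (Set.Ici W)}

/-- The set of integers `W` such that `(-∞,0]` φⁿ-codes `(-∞,W]`; `W⁻(n,φ)` is its
greatest element. -/
def WminusSet {A : Type*} (X : Set (ℤ → A)) (φ : (ℤ → A) → (ℤ → A)) (n : ℕ) : Set ℤ :=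
  {W | Codes X (φ^[n]) (Set.Iic 0) (Set.Iic W)}

/-- A subshift of finite type: defined by a finite set of excluded words. -/
def IsSFT {A : Type*} (X : Set (ℤ → A)) : Prop :=
  ∃ F : Set (List A), F.Finite ∧
    ∀ x : ℤ → A, x ∈ X ↔ ∀ (n : ℤ), ∀ w ∈ F, ∃ i : Fin w.length, x (n + i) ≠ w.get i

/-!
In an SFT, two points agreeing on a long enough block can be spliced along it. For a time `n`
with `W⁺(n) - W⁻(n) + 1 ≤ C`, splice `x` and `y` along a window of fixed width `D ≥ C` starting
at `-W⁺(n)`: the splice agrees with `x` far enough to the left and with `y` on `[-W⁺(n), ∞)`, so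
`φⁿ x 0 = φⁿ y 0`. Thus each such `φⁿ` is a sliding block code of width `D`, with window offset
`-W⁺(n)`. There are only finitely many block rules of width `D`, so two such times `n₁ < n₂`
share one, and then `φ^(n₂ - n₁)` is a power of the shift.
-/

open Set

section Shift

variable {A : Type*}

theorem zshift_zero (x : ℤ → A) : zshift 0 x = x := by
  funext n
  simp [zshift]

theorem zshift_zshift (a b : ℤ) (x : ℤ → A) : zshift a (zshift b x) = zshift (a + b) x := by
  funext n
  simp only [zshift, add_assoc]

theorem zshift_add_one (k : ℤ) (x : ℤ → A) : zshift (k + 1) x = shift (zshift k x) := by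
  funext n
  simp only [zshift, shift, add_comm k 1, add_assoc]

end Shift

section SFT

variable {A : Type*} {X : Set (ℤ → A)}

theorem IsSFT.mapsTo_zshift (hX : IsSFT X) (k : ℤ) : MapsTo (zshift k) X X := by
  obtain ⟨F, -, hmem⟩ := hX
  intro x hx
  refine (hmem _).2 fun n w hw => ?_
  obtain ⟨i, hi⟩ := (hmem x).1 hx (n + k) w hw
  exact ⟨i, by simpa only [zshift, add_right_comm] using hi⟩

theorem IsSFT.exists_mem_of_forall_window (hX : IsSFT X) :
    ∃ L : ℕ, ∀ z : ℤ → A, (∀ m : ℤ, ∃ x ∈ X, ∀ i < L, z (m + i) = x (m + i)) → z ∈ X := by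
  obtain ⟨F, hF, hmem⟩ := hX
  refine ⟨hF.toFinset.sup List.length, fun z hz => (hmem z).2 fun m w hw => ?_⟩
  obtain ⟨x, hx, hzx⟩ := hz m
  obtain ⟨i, hi⟩ := (hmem x).1 hx m w hw
  have hlen : w.length ≤ hF.toFinset.sup List.length := Finset.le_sup (hF.mem_toFinset.2 hw)
  exact ⟨i, by rwa [hzx i (by omega)]⟩

def splice (a : ℤ) (x y : ℤ → A) : ℤ → A := fun t => if t < a then x t else y t

theorem IsSFT.exists_splice_mem (hX : IsSFT X) :
    ∃ L : ℤ, ∀ a b : ℤ, a + L ≤ b → ∀ x ∈ X, ∀ y ∈ X, (∀ t ∈ Icc a b, x t = y t) →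
      splice a x y ∈ X := by
  obtain ⟨L, hL⟩ := hX.exists_mem_of_forall_window
  refine ⟨L, fun a b hab x hx y hy hxy => hL _ fun m => ?_⟩
  by_cases hm : a ≤ m
  · exact ⟨y, hy, fun i _ => if_neg (by omega)⟩
  · refine ⟨x, hx, fun i hi => ?_⟩
    by_cases ht : m + i < a
    · exact if_pos ht
    · rw [splice, if_neg ht, hxy _ ⟨by omega, by omega⟩]

end SFT

theorem Codes.mono {A : Type*} {X : Set (ℤ → A)} {ψ : (ℤ → A) → (ℤ → A)} {S S' T T' : Set ℤ}
    (h : Codes X ψ S T) (hS : S ⊆ S') (hT : T' ⊆ T) : Codes X ψ S' T' :=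
  fun x hx y hy hxy j hj => h x hx y hy (fun i hi => hxy i (hS hi)) j (hT hj)

section Endo

variable {A : Type*} [TopologicalSpace A] {X : Set (ℤ → A)} {φ ψ ψ₁ ψ₂ : (ℤ → A) → (ℤ → A)}

theorem IsEndo.iterate (hφ : IsEndo X φ) (n : ℕ) : IsEndo X (φ^[n]) where
  maps := hφ.maps.iterate n
  surj := hφ.surj.iterate n
  cont := hφ.cont.iterate hφ.maps n
  comm := by
    induction n with
    | zero => simp
    | succ n ih =>
      intro x hx
      rw [Function.iterate_succ_apply, Function.iterate_succ_apply, hφ.comm x hx,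
        ih _ (hφ.maps hx)]

theorem IsEndo.map_zshift (hφ : IsEndo X φ) (hX : ∀ k, MapsTo (zshift k) X X) (k : ℤ)
    {x : ℤ → A} (hx : x ∈ X) : φ (zshift k x) = zshift k (φ x) := by
  have hnat : ∀ n : ℕ, ∀ x ∈ X, φ (zshift n x) = zshift n (φ x) := by
    intro n
    induction n with
    | zero => simp [zshift_zero]
    | succ n ih =>
      intro x hx
      push_cast
      rw [zshift_add_one, zshift_add_one, hφ.comm _ (hX n hx), ih x hx]
  obtain ⟨n, rfl | rfl⟩ := k.eq_nat_or_neg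
  · exact hnat n x hx
  · have hy := hX (-n) hx
    calc φ (zshift (-n) x) = zshift (-n) (zshift n (φ (zshift (-n) x))) := by
          rw [zshift_zshift, neg_add_cancel, zshift_zero]
      _ = zshift (-n) (φ x) := by
          rw [← hnat n _ hy, zshift_zshift, add_neg_cancel, zshift_zero]

theorem Codes.translate (hX : ∀ k, MapsTo (zshift k) X X) (hψ : IsEndo X ψ) {S T : Set ℤ}
    (h : Codes X ψ S T) (t : ℤ) : Codes X ψ ((· - t) ⁻¹' S) ((· - t) ⁻¹' T) := by
  intro x hx y hy hxy j hj
  have := h _ (hX t hx) _ (hX t hy) (fun i hi => hxy (i + t) (by simpa using hi)) (j - t) hj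
  simpa [hψ.map_zshift hX t hx, hψ.map_zshift hX t hy, zshift] using this

theorem Codes.Icc_of_Ici_Iic (hX : ∀ k, MapsTo (zshift k) X X) (hψ : IsEndo X ψ) {L p q D : ℤ}
    (hsplice : ∀ a b : ℤ, a + L ≤ b → ∀ x ∈ X, ∀ y ∈ X, (∀ t ∈ Icc a b, x t = y t) →
      splice a x y ∈ X)
    (hp : Codes X ψ (Ici 0) (Ici p)) (hq : Codes X ψ (Iic 0) (Iic q))
    (hLD : L ≤ D) (hpq : p - q ≤ D) : Codes X ψ (Icc (-p) (-p + D)) {0} := by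
  have hleft : Codes X ψ (Iic (-q)) {0} := by
    refine (hq.translate hX hψ (-q)).mono ?_ ?_ <;> simp
  have hright : Codes X ψ (Ici (-p)) {0} := by
    refine (hp.translate hX hψ (-p)).mono ?_ ?_ <;> simp
  rintro x hx y hy hxy j rfl
  have hz := hsplice (-p) (-p + D) (by omega) x hx y hy hxy
  have hzx : ∀ i ∈ Iic (-q), splice (-p) x y i = x i := fun i hi => by
    by_cases h : i < -p
    · exact if_pos h
    · rw [splice, if_neg h, hxy i ⟨by omega, by simp at hi; omega⟩]
  have hzy : ∀ i ∈ Ici (-p), splice (-p) x y i = y i := fun i hi =>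
    if_neg (not_lt.2 hi)
  rw [← hleft _ hz _ hx hzx 0 rfl, hright _ hz _ hy hzy 0 rfl]

/-- The graph of the block rule by which `ψ` would read its `0`-th symbol off the window
`[a, a + D]`, the window being indexed from its left end. -/
def windowGraph (X : Set (ℤ → A)) (ψ : (ℤ → A) → (ℤ → A)) (a D : ℤ) :
    Set ((Icc (0 : ℤ) D → A) × A) :=
  {p | ∃ x ∈ X, (fun i : Icc (0 : ℤ) D => x (a + i)) = p.1 ∧ ψ x 0 = p.2}

theorem eq_zshift_of_windowGraph_eq (hX : ∀ k, MapsTo (zshift k) X X)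
    (hψ₁ : IsEndo X ψ₁) (hψ₂ : IsEndo X ψ₂) {a₁ a₂ D : ℤ}
    (hcode : Codes X ψ₂ (Icc a₂ (a₂ + D)) {0})
    (heq : windowGraph X ψ₁ a₁ D = windowGraph X ψ₂ a₂ D) {x : ℤ → A} (hx : x ∈ X) :
    ψ₁ x = zshift (a₁ - a₂) (ψ₂ x) := by
  funext j
  have hmem : ((fun i : Icc (0 : ℤ) D => zshift j x (a₁ + i)), ψ₁ (zshift j x) 0) ∈
      windowGraph X ψ₂ a₂ D := heq ▸ ⟨zshift j x, hX j hx, rfl, rfl⟩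
  obtain ⟨x', hx', hwin, hval⟩ := hmem
  have hagree : ∀ t ∈ Icc a₂ (a₂ + D), x' t = zshift (j + (a₁ - a₂)) x t := by
    intro t ht
    have := congrFun hwin ⟨t - a₂, by simp at ht ⊢; omega⟩
    simp only [zshift] at this ⊢
    convert this using 2 <;> ring
  have := hcode _ hx' _ (hX _ hx) hagree 0 rfl
  rw [hval, hψ₁.map_zshift hX j hx, hψ₂.map_zshift hX _ hx] at this
  simpa [zshift] using this

end Endo

theorem finite_order_mod_shift_general {A : Type*} [Fintype A] [TopologicalSpace A]
    (X : Set (ℤ → A)) (hSFT : IsSFT X)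
    (φ : (ℤ → A) → (ℤ → A)) (hφ : IsEndo X φ)
    (Wp Wm : ℕ → ℤ)
    (hWp : ∀ n, IsLeast (WplusSet X φ n) (Wp n))
    (hWm : ∀ n, IsGreatest (WminusSet X φ n) (Wm n))
    (C : ℤ) (hC : {n : ℕ | Wp n - Wm n + 1 ≤ C}.Infinite) :
    ∃ m : ℕ, 1 ≤ m ∧ ∃ k : ℤ, ∀ x ∈ X, φ^[m] x = zshift k x := by
  have hX := hSFT.mapsTo_zshift
  obtain ⟨L, hsplice⟩ := hSFT.exists_splice_mem
  have hcode : ∀ n ∈ {n : ℕ | Wp n - Wm n + 1 ≤ C},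
      Codes X (φ^[n]) (Icc (-Wp n) (-Wp n + max L C)) {0} := fun n hn =>
    Codes.Icc_of_Ici_Iic hX (hφ.iterate n) hsplice (hWp n).1 (hWm n).1 (le_max_left L C)
      (by have : Wp n - Wm n + 1 ≤ C := hn; omega)
  obtain ⟨n₁, hn₁, n₂, hn₂, hne, heq⟩ := hC.exists_ne_map_eq_of_mapsTo
    (f := fun n => windowGraph X (φ^[n]) (-Wp n) (max L C)) (mapsTo_univ _ _) finite_univ
  wlog hlt : n₁ < n₂ generalizing n₁ n₂
  · exact this n₂ hn₂ n₁ hn₁ hne.symm heq.symm (by omega)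
  refine ⟨n₂ - n₁, by omega, Wp n₁ - Wp n₂, fun y hy => ?_⟩
  obtain ⟨x, hx, rfl⟩ := (hφ.iterate n₁).surj hy
  rw [← Function.iterate_add_apply, Nat.sub_add_cancel hlt.le,
    eq_zshift_of_windowGraph_eq hX (hφ.iterate n₂) (hφ.iterate n₁) (hcode n₁ hn₁) heq.symm hx]
  congr 1
  ring

/-- For an SFT, if `liminf |I(-n,φ)| < ∞` then `φ` has finite order in
`End(X,σ)/⟨σ⟩`: some `φᵐ` (`m ≥ 1`) equals a power `σᵏ` of the shift on `X`. -/
theorem finite_order_mod_shift {A : Type*} [Fintype A] [TopologicalSpace A]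
    [DiscreteTopology A] (X : Set (ℤ → A)) (hX : IsSubshift X) (hSFT : IsSFT X)
    (hinf : X.Infinite)
    (φ : (ℤ → A) → (ℤ → A)) (hφ : IsEndo X φ)
    (Wp Wm : ℕ → ℤ)
    (hWp : ∀ n, IsLeast (WplusSet X φ n) (Wp n))
    (hWm : ∀ n, IsGreatest (WminusSet X φ n) (Wm n))
    (C : ℤ) (hC : {n : ℕ | Wp n - Wm n + 1 ≤ C}.Infinite) :
    ∃ m : ℕ, 1 ≤ m ∧ ∃ k : ℤ, ∀ x ∈ X, φ^[m] x = zshift k x :=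
  finite_order_mod_shift_general X hSFT φ hφ Wp Wm hWp hWm C hC
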